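/- Let 𝔤 be a finite-dimensional turrifiable algebra over a field K, and let A ⊆ 𝔤 be a symmetric set generating 𝔤 as an algebra. Then for every d ≥ 1 with d ≤ dim(𝔤), the set 𝒯_{≤d}(A) of towers of height at most d over A spans a K-vector subspace of dimension at least d. -/
import Mathlib


/-- `z ∈ X^k`: `z` obtained by combining `k` elements of `X` via `+` and `br`. -/
inductive AlgPowB {K : Type*} [Field K] {g : Type*} [AddCommGroup g] [Module K g]
    (br : g →ₗ[K] g →ₗ[K] g) (X : Set g) : ℕ → g → Prop
  | base {x : g} : x ∈ X → AlgPowB br X 1 x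
  | add {j k : ℕ} {x y : g} : AlgPowB br X j x → AlgPowB br X k y →
      AlgPowB br X (j + k) (x + y)
  | node {j k : ℕ} {x y : g} : AlgPowB br X j x → AlgPowB br X k y →
      AlgPowB br X (j + k) (br x y)

/-- `z ∈ X^{[k]}`: pure bracket expressions of length `k`. -/
inductive BrkPowB {K : Type*} [Field K] {g : Type*} [AddCommGroup g] [Module K g]
    (br : g →ₗ[K] g →ₗ[K] g) (X : Set g) : ℕ → g → Prop
  | base {x : g} : x ∈ X → BrkPowB br X 1 x
  | node {j k : ℕ} {a b : g} : BrkPowB br X j a → BrkPowB br X k b →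
      BrkPowB br X (j + k) (br a b)

/-- Towers of height `k` over `Y` (the set `𝒯_k(Y)`). -/
def TowB {K : Type*} [Field K] {g : Type*} [AddCommGroup g] [Module K g]
    (br : g →ₗ[K] g →ₗ[K] g) (Y : Set g) : ℕ → Set g
  | 0 => {0}
  | 1 => Y
  | (k + 2) =>
      Set.image2 (fun a b => br a b) (TowB br Y (k + 1)) Y ∪
        Set.image2 (fun a b => br a b) Y (TowB br Y (k + 1))

/-- `𝒮_k(x,Y)`: bracket expressions of length `k` with one marked entry `x`. -/
inductive SMarkB {K : Type*} [Field K] {g : Type*} [AddCommGroup g] [Module K g]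
    (br : g →ₗ[K] g →ₗ[K] g) (x : g) (Y : Set g) : ℕ → g → Prop
  | base : SMarkB br x Y 1 x
  | left {j k : ℕ} {a b : g} : SMarkB br x Y j a → BrkPowB br Y k b →
      SMarkB br x Y (j + k) (br a b)
  | right {j k : ℕ} {a b : g} : BrkPowB br Y j a → SMarkB br x Y k b →
      SMarkB br x Y (j + k) (br a b)

/-- `𝒯_k(x,Y)`: towers of height `k` with one marked entry `x`. -/
def TMarkB {K : Type*} [Field K] {g : Type*} [AddCommGroup g] [Module K g]
    (br : g →ₗ[K] g →ₗ[K] g) (x : g) (Y : Set g) : ℕ → Set g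
  | 0 => {0}
  | 1 => {x}
  | (k + 2) =>
      Set.image2 (fun a b => br a b) (TMarkB br x Y (k + 1)) Y ∪
        Set.image2 (fun a b => br a b) Y (TMarkB br x Y (k + 1)) ∪
        Set.image2 (fun a b => br a b) (TowB br Y (k + 1)) {x} ∪
        Set.image2 (fun a b => br a b) {x} (TowB br Y (k + 1))

section Aux
open Submodule Set Module

variable {K : Type*} [Field K] {g : Type*} [AddCommGroup g] [Module K g]
variable (br : g →ₗ[K] g →ₗ[K] g) (A : Set g)

private def Vsub (k : ℕ) : Submodule K g :=
  Submodule.span K (⋃ j ∈ Set.Iic k, TowB br A j)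

private lemma Vsub_def (k : ℕ) :
    Vsub br A k = Submodule.span K (⋃ j ∈ Set.Iic k, TowB br A j) := rfl

variable {br A}

private lemma tow_subset_V {j k : ℕ} (h : j ≤ k) :
    TowB br A j ⊆ (Vsub br A k : Set g) :=
  fun _ hz => Submodule.subset_span (Set.mem_biUnion h hz)

private lemma V_mono {j k : ℕ} (h : j ≤ k) : Vsub br A j ≤ Vsub br A k :=
  Submodule.span_mono
    (Set.biUnion_mono (Set.Iic_subset_Iic.2 h) fun _ _ => subset_rfl)

private lemma spanA_le_V {k : ℕ} (h : 1 ≤ k) : Submodule.span K A ≤ Vsub br A k :=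
  Submodule.span_le.2 (tow_subset_V (j := 1) h)

private lemma image2_left (j : ℕ) :
    Set.image2 (fun a b => br a b) (TowB br A j) A ⊆ TowB br A (j + 1) ∪ {0} := by
  match j with
  | 0 =>
    rintro z ⟨a, ha, b, hb, rfl⟩
    simp only [TowB, Set.mem_singleton_iff] at ha
    subst ha
    right; simp
  | (n + 1) =>
    intro z hz
    exact Or.inl (Or.inl hz)

private lemma image2_right (j : ℕ) :
    Set.image2 (fun a b => br a b) A (TowB br A j) ⊆ TowB br A (j + 1) ∪ {0} := by
  match j with
  | 0 =>
    rintro z ⟨a, ha, b, hb, rfl⟩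
    simp only [TowB, Set.mem_singleton_iff] at hb
    subst hb
    right; simp
  | (n + 1) =>
    intro z hz
    exact Or.inl (Or.inr hz)

private lemma map2_V_A_le (k : ℕ) :
    Submodule.map₂ br (Vsub br A k) (Submodule.span K A) ≤ Vsub br A (k + 1) := by
  rw [Vsub_def, Submodule.map₂_span_span]
  refine Submodule.span_le.2 ?_
  rintro z ⟨a, ha, b, hb, rfl⟩
  obtain ⟨j, hj, haj⟩ := Set.mem_iUnion₂.1 ha
  rcases image2_left j (Set.mem_image2_of_mem haj hb) with h | h
  · exact tow_subset_V (Nat.succ_le_succ (Set.mem_Iic.1 hj)) h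
  · simp only [Set.mem_singleton_iff] at h
    show br a b ∈ Vsub br A (k + 1)
    rw [h]; exact (Vsub br A (k + 1)).zero_mem

private lemma map2_A_V_le (k : ℕ) :
    Submodule.map₂ br (Submodule.span K A) (Vsub br A k) ≤ Vsub br A (k + 1) := by
  rw [Vsub_def, Submodule.map₂_span_span]
  refine Submodule.span_le.2 ?_
  rintro z ⟨a, ha, b, hb, rfl⟩
  obtain ⟨j, hj, hbj⟩ := Set.mem_iUnion₂.1 hb
  rcases image2_right j (Set.mem_image2_of_mem ha hbj) with h | h
  · exact tow_subset_V (Nat.succ_le_succ (Set.mem_Iic.1 hj)) h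
  · simp only [Set.mem_singleton_iff] at h
    show br a b ∈ Vsub br A (k + 1)
    rw [h]; exact (Vsub br A (k + 1)).zero_mem

private lemma V_succ_le (n : ℕ) :
    Vsub br A (n + 2) ≤
      Vsub br A (n + 1) ⊔ Submodule.map₂ br (Vsub br A (n + 1)) (Submodule.span K A)
        ⊔ Submodule.map₂ br (Submodule.span K A) (Vsub br A (n + 1)) := by
  rw [Vsub_def]
  refine Submodule.span_le.2 ?_
  intro z hz
  obtain ⟨j, hj, hzj⟩ := Set.mem_iUnion₂.1 hz
  rcases Nat.lt_or_ge j (n + 2) with h | h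
  · have : z ∈ Vsub br A (n + 1) := tow_subset_V (Nat.lt_succ_iff.1 h) hzj
    exact Submodule.mem_sup_left (Submodule.mem_sup_left this)
  · have hje : j = n + 2 := le_antisymm (Set.mem_Iic.1 hj) h
    subst hje
    rcases hzj with ⟨a, ha, b, hb, rfl⟩ | ⟨a, ha, b, hb, rfl⟩
    · exact Submodule.mem_sup_left (Submodule.mem_sup_right
        (Submodule.apply_mem_map₂ br (tow_subset_V le_rfl ha) (Submodule.subset_span hb)))
    · exact Submodule.mem_sup_right
        (Submodule.apply_mem_map₂ br (Submodule.subset_span ha) (tow_subset_V le_rfl hb))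

private lemma alg_pos {j : ℕ} {z : g} (h : AlgPowB br A j z) : 1 ≤ j := by
  induction h <;> omega

private lemma brk_mark {j : ℕ} {z : g} (h : BrkPowB br A j z) :
    ∃ x ∈ A, SMarkB br x A j z := by
  induction h with
  | base hx => exact ⟨_, hx, SMarkB.base⟩
  | node ha hb iha ihb =>
    obtain ⟨x, hx, hs⟩ := iha
    exact ⟨x, hx, SMarkB.left hs hb⟩

private lemma tmark_subset {x : g} (hx : x ∈ A) :
    ∀ j, TMarkB br x A j ⊆ TowB br A j
  | 0 => subset_rfl
  | 1 => by
    intro z hz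
    simp only [TMarkB, Set.mem_singleton_iff] at hz
    subst hz
    exact hx
  | (n + 2) => by
    intro z hz
    rcases hz with ((⟨a, ha, b, hb, rfl⟩ | ⟨a, ha, b, hb, rfl⟩) | ⟨a, ha, b, hb, rfl⟩)
        | ⟨a, ha, b, hb, rfl⟩
    · exact Or.inl (Set.mem_image2_of_mem (tmark_subset hx (n + 1) ha) hb)
    · exact Or.inr (Set.mem_image2_of_mem ha (tmark_subset hx (n + 1) hb))
    · simp only [Set.mem_singleton_iff] at hb
      subst hb
      exact Or.inl (Set.mem_image2_of_mem ha hx)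
    · simp only [Set.mem_singleton_iff] at ha
      subst ha
      exact Or.inr (Set.mem_image2_of_mem hx hb)

private lemma brk_mem_V
    (hturr : ∀ (x : g) (Y : Set g), Y.Finite → (0 : g) ∈ Y → Y = -Y →
      ∀ k : ℕ, 1 ≤ k →
        ({0} ∪ {z | ∃ j ≤ k, SMarkB br x Y j z}) ⊆
          (Submodule.span K (⋃ j ∈ Set.Iic k, TMarkB br x Y j) : Set g))
    (hfin : A.Finite) (h0 : (0 : g) ∈ A) (hsym : A = -A)
    {k j : ℕ} {z : g} (hk : 1 ≤ k) (hj : j ≤ k) (hz : BrkPowB br A j z) :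
    z ∈ Vsub br A k := by
  obtain ⟨x, hx, hs⟩ := brk_mark hz
  have h1 := hturr x A hfin h0 hsym k hk (Set.mem_union_right _ ⟨j, hj, hs⟩)
  have h2 : Submodule.span K (⋃ i ∈ Set.Iic k, TMarkB br x A i) ≤ Vsub br A k := by
    rw [Vsub_def]
    exact Submodule.span_mono (Set.iUnion₂_mono fun i _ => tmark_subset hx i)
  exact h2 h1

private def Bset (k : ℕ) : Set g := {w | ∃ j ≤ k, BrkPowB br A j w}

private lemma alg_mem_span_B {k : ℕ} {z : g} (h : AlgPowB br A k z) :
    z ∈ Submodule.span K (Bset (br := br) (A := A) k) := by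
  induction h with
  | base hx => exact Submodule.subset_span ⟨1, le_rfl, BrkPowB.base hx⟩
  | add h1 h2 ih1 ih2 =>
    refine Submodule.add_mem _ (Submodule.span_mono ?_ ih1) (Submodule.span_mono ?_ ih2)
    · rintro w ⟨i, hi, hb⟩; exact ⟨i, by omega, hb⟩
    · rintro w ⟨i, hi, hb⟩; exact ⟨i, by omega, hb⟩
  | @node j k x y h1 h2 ih1 ih2 =>
    have hle : Submodule.map₂ br (Submodule.span K (Bset (br := br) (A := A) j))
        (Submodule.span K (Bset (br := br) (A := A) k)) ≤
        Submodule.span K (Bset (br := br) (A := A) (j + k)) := by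
      rw [Submodule.map₂_span_span]
      refine Submodule.span_mono ?_
      rintro w ⟨a, ha, b, hb, rfl⟩
      obtain ⟨ja, hja, hba⟩ := ha
      obtain ⟨jb, hjb, hbb⟩ := hb
      exact ⟨ja + jb, by omega, BrkPowB.node hba hbb⟩
    exact hle (Submodule.apply_mem_map₂ br ih1 ih2)

private lemma alg_mem_V
    (hturr : ∀ (x : g) (Y : Set g), Y.Finite → (0 : g) ∈ Y → Y = -Y →
      ∀ k : ℕ, 1 ≤ k →
        ({0} ∪ {z | ∃ j ≤ k, SMarkB br x Y j z}) ⊆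
          (Submodule.span K (⋃ j ∈ Set.Iic k, TMarkB br x Y j) : Set g))
    (hfin : A.Finite) (h0 : (0 : g) ∈ A) (hsym : A = -A)
    {k : ℕ} {z : g} (h : AlgPowB br A k z) : z ∈ Vsub br A k := by
  have hk := alg_pos h
  have hmem := alg_mem_span_B h
  have hle : Submodule.span K (Bset (br := br) (A := A) k) ≤ Vsub br A k := by
    refine Submodule.span_le.2 ?_
    rintro w ⟨j, hj, hb⟩
    exact brk_mem_V hturr hfin h0 hsym hk hj hb
  exact hle hmem

private lemma V_stab {k : ℕ} (hk : 1 ≤ k) (heq : Vsub br A (k + 1) = Vsub br A k) :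
    ∀ m, Vsub br A (k + 1 + m) ≤ Vsub br A k
  | 0 => heq.le
  | (m + 1) => by
    have ih := V_stab hk heq m
    have hV : Vsub br A (k + m + 1) ≤ Vsub br A k := by
      rw [show k + m + 1 = k + 1 + m by omega]; exact ih
    rw [show k + 1 + (m + 1) = k + m + 2 by omega]
    refine (V_succ_le (k + m)).trans ?_
    refine sup_le (sup_le hV ?_) ?_
    · exact ((Submodule.map₂_le_map₂ hV le_rfl).trans (map2_V_A_le k)).trans heq.le
    · exact ((Submodule.map₂_le_map₂ le_rfl hV).trans (map2_A_V_le k)).trans heq.le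

end Aux


/-- For a turrifiable finite-dimensional algebra, towers of height at most `d`
over a generating symmetric set span a subspace of dimension at least `d`. -/
theorem tow_span_dim_of_turrifiable {K : Type*} [Field K] {g : Type*}
    [AddCommGroup g] [Module K g] [FiniteDimensional K g]
    (br : g →ₗ[K] g →ₗ[K] g)
    (hturr : ∀ (x : g) (Y : Set g), Y.Finite → (0 : g) ∈ Y → Y = -Y →
      ∀ k : ℕ, 1 ≤ k →
        ({0} ∪ {z | ∃ j ≤ k, SMarkB br x Y j z}) ⊆
          (Submodule.span K (⋃ j ∈ Set.Iic k, TMarkB br x Y j) : Set g))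
    (A : Set g) (hfin : A.Finite) (h0 : (0 : g) ∈ A) (hsym : A = -A)
    (hgen : ∀ z : g, ∃ k : ℕ, AlgPowB br A k z)
    (d : ℕ) (hd1 : 1 ≤ d) (hdD : d ≤ Module.finrank K g) :
    d ≤ Module.finrank K (Submodule.span K (⋃ j ∈ Set.Iic d, TowB br A j)) := by
  -- If Vsub (k+1) = Vsub k for some k ≥ 1, then Vsub k = ⊤.
  have Vtop : ∀ k : ℕ, 1 ≤ k → Vsub br A (k + 1) = Vsub br A k → Vsub br A k = ⊤ := by
    intro k hk heq
    rw [eq_top_iff]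
    rintro z -
    obtain ⟨m, hm⟩ := hgen z
    have h1 : z ∈ Vsub br A m := alg_mem_V hturr hfin h0 hsym hm
    exact V_stab hk heq m (V_mono (by omega) h1)
  -- base case: Vsub 1 has positive rank
  have base : 1 ≤ Module.finrank K (Vsub br A 1) := by
    by_contra hcon
    have hz : Module.finrank K (Vsub br A 1) = 0 := by omega
    have hbot : Vsub br A 1 = ⊥ := Submodule.finrank_eq_zero.1 hz
    have h2 : Vsub br A (1 + 1) = Vsub br A 1 := by
      refine le_antisymm ?_ (V_mono (by omega))
      refine (V_succ_le 0).trans ?_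
      have hA : Submodule.span K A ≤ Vsub br A 1 := spanA_le_V le_rfl
      refine sup_le (sup_le le_rfl ?_) ?_
      · refine le_trans (Submodule.map₂_le_map₂ hbot.le le_rfl) ?_
        rw [Submodule.map₂_bot_left]
        exact bot_le
      · refine le_trans (Submodule.map₂_le_map₂ le_rfl hbot.le) ?_
        rw [Submodule.map₂_bot_right]
        exact bot_le
    have htop : Vsub br A 1 = ⊤ := Vtop 1 le_rfl h2
    have : Module.finrank K g = 0 := by
      rw [← finrank_top K g, ← htop, hbot, finrank_bot]
    omega
  have key : ∀ j : ℕ, 1 ≤ j → j ≤ d → j ≤ Module.finrank K (Vsub br A j) := by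
    intro j
    induction j with
    | zero => omega
    | succ n ih =>
      intro _ hjd
      rcases Nat.eq_zero_or_pos n with hn | hn
      · subst hn; exact base
      have ihn := ih hn (by omega)
      rcases eq_or_lt_of_le (V_mono (Nat.le_succ n) : Vsub br A n ≤ Vsub br A (n + 1))
        with heq | hlt
      · have htop : Vsub br A n = ⊤ := Vtop n hn heq.symm
        have htop' : Vsub br A (n + 1) = ⊤ := top_le_iff.1 (htop ▸ V_mono (Nat.le_succ n))
        have : Module.finrank K (Vsub br A (n + 1)) = Module.finrank K g := by
          rw [htop', finrank_top]
        omega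
      · have := Submodule.finrank_lt_finrank_of_lt hlt
        omega
  exact key d hd1 le_rfl
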